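/- arXiv:1811.09142 — 5 statements merged into one kernel-verified Lean document; each statement's English description precedes it below -/
import Mathlib

section
/- Let A_1, ..., A_s be subsets of a finite set, each of size r+1, such that |A_i ∩ A_j| ≤ 1 for all i ≠ j. If |A_1 ∪ ... ∪ A_s| ≤ sr, then the graph on vertex set {1,...,s} with an edge {i,j} whenever A_i ∩ A_j ≠ ∅ has at least s edges, and hence contains a cycle. -/
/-!
Summing `|A_i ∩ A_j|` over pairs bounds the overlap lost in the union, so
`s (r + 1) = ∑ |A_i| ≤ |⋃ A_i| + ∑_{i<j} |A_i ∩ A_j| ≤ s r + |E(G)|`, because every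
intersecting pair contributes at most one point and is an edge. Hence `G` has at least `s`
edges, while a forest on `s` vertices has at most `s - 1`.
-/

open Finset SimpleGraph

namespace Finset

variable {ι α : Type*}

lemma sum_sum_erase_insert [DecidableEq ι] {M : Type*} [AddCommMonoid M] (f : ι → ι → M)
    {a : ι} {t : Finset ι} (ha : a ∉ t) :
    ∑ i ∈ insert a t, ∑ j ∈ (insert a t).erase i, f i j
      = ∑ j ∈ t, (f a j + f j a) + ∑ i ∈ t, ∑ j ∈ t.erase i, f i j := by
  have herase : ∀ i ∈ t, ∑ j ∈ (insert a t).erase i, f i j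
      = f i a + ∑ j ∈ t.erase i, f i j := fun i hi => by
    rw [erase_insert_of_ne (ne_of_mem_of_not_mem hi ha).symm,
      sum_insert fun h => ha (mem_of_mem_erase h)]
  rw [sum_insert ha, erase_insert ha, sum_congr rfl herase, sum_add_distrib, sum_add_distrib,
    add_assoc]

variable [DecidableEq α]

lemma card_add_card_biUnion_le (B : Finset α) (A : ι → Finset α) (t : Finset ι) :
    #B + #(t.biUnion A) ≤ #(B ∪ t.biUnion A) + ∑ j ∈ t, #(B ∩ A j) := by
  rw [← card_union_add_card_inter, inter_biUnion]
  exact Nat.add_le_add_left card_biUnion_le _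

/-- The second Bonferroni inequality, with every pair counted in both orders. -/
lemma two_mul_sum_card_le [DecidableEq ι] (A : ι → Finset α) (t : Finset ι) :
    2 * ∑ i ∈ t, #(A i) ≤ 2 * #(t.biUnion A) + ∑ i ∈ t, ∑ j ∈ t.erase i, #(A i ∩ A j) := by
  induction t using Finset.induction_on with
  | empty => simp
  | @insert a t ha ih =>
    have hstep := card_add_card_biUnion_le (A a) A t
    have hsymm : ∑ j ∈ t, (#(A a ∩ A j) + #(A j ∩ A a)) = 2 * ∑ j ∈ t, #(A a ∩ A j) := by
      simp only [inter_comm (A _) (A a), ← two_mul, mul_sum]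
    rw [sum_insert ha, biUnion_insert, sum_sum_erase_insert _ ha, hsymm]
    omega

end Finset

namespace SimpleGraph

variable {V : Type*} [Fintype V]

lemma IsAcyclic.card_edgeFinset_lt [Nonempty V] {G : SimpleGraph V} [Fintype G.edgeSet]
    (hG : G.IsAcyclic) : #G.edgeFinset < Fintype.card V := by
  classical
  obtain ⟨T, hGT, -, hT⟩ := connected_top.exists_isTree_le_of_le_of_isAcyclic le_top hG
  have hcard := hT.card_edgeFinset
  have hle : #G.edgeFinset ≤ #T.edgeFinset := card_le_card (edgeFinset_mono hGT)
  omega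

section IntersectingFamily

variable {α : Type*} [DecidableEq α] (G : SimpleGraph V) (A : V → Finset α)
  (hpair : ∀ i j, i ≠ j → #(A i ∩ A j) ≤ 1)
  (hG : ∀ i j, i ≠ j → (A i ∩ A j).Nonempty → G.Adj i j)
include hpair hG

lemma sum_card_inter_le_degree [DecidableEq V] [DecidableRel G.Adj] (i : V) :
    ∑ j ∈ univ.erase i, #(A i ∩ A j) ≤ G.degree i := by
  have hsub : G.neighborFinset i ⊆ univ.erase i := fun j hj =>
    mem_erase.mpr ⟨((G.mem_neighborFinset i j).mp hj).ne.symm, mem_univ j⟩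
  have hdisjoint : ∀ j ∈ univ.erase i, j ∉ G.neighborFinset i → #(A i ∩ A j) = 0 :=
    fun j hj hnadj => card_eq_zero.mpr <| not_nonempty_iff_eq_empty.mp fun hne =>
      hnadj ((G.mem_neighborFinset i j).mpr (hG i j (mem_erase.mp hj).1.symm hne))
  rw [← sum_subset hsub hdisjoint, ← card_neighborFinset_eq_degree, card_eq_sum_ones]
  exact sum_le_sum fun j hj => hpair i j ((G.mem_neighborFinset i j).mp hj).ne

lemma sum_card_le_card_biUnion_add_card_edgeFinset [Fintype G.edgeSet] :
    ∑ i, #(A i) ≤ #(univ.biUnion A) + #G.edgeFinset := by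
  classical
  have hpairs := (two_mul_sum_card_le A univ).trans <| Nat.add_le_add_left
    (sum_le_sum fun i _ => G.sum_card_inter_le_degree A hpair hG i) _
  have hedges : #G.edgeFinset = #(@edgeFinset _ G G.fintypeEdgeSet) := by
    congr!
  rw [sum_degrees_eq_twice_card_edges, ← hedges] at hpairs
  omega

end IntersectingFamily

end SimpleGraph

theorem stmt_5_general {α : Type*} [DecidableEq α] (r s : ℕ) (hs : 0 < s)
    (A : Fin s → Finset α)
    (hcard : ∀ i, (A i).card = r + 1)
    (hpair : ∀ i j, i ≠ j → (A i ∩ A j).card ≤ 1)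
    (hunion : (Finset.univ.biUnion A).card ≤ s * r)
    (G : SimpleGraph (Fin s)) [Fintype G.edgeSet]
    (hG : ∀ i j, G.Adj i j ↔ i ≠ j ∧ (A i ∩ A j).Nonempty) :
    s ≤ G.edgeFinset.card ∧ ∃ (v : Fin s) (w : G.Walk v v), w.IsCycle := by
  have hsum : ∑ i, #(A i) = s * r + s := by simp [hcard, mul_add]
  have hbound := G.sum_card_le_card_biUnion_add_card_edgeFinset A hpair
    fun i j hij hne => (hG i j).mpr ⟨hij, hne⟩
  have hedges : s ≤ #G.edgeFinset := by omega
  refine ⟨hedges, ?_⟩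
  by_contra hnone
  have : Nonempty (Fin s) := ⟨⟨0, hs⟩⟩
  have hlt := IsAcyclic.card_edgeFinset_lt (G := G) fun v w hw => hnone ⟨v, w, hw⟩
  rw [Fintype.card_fin] at hlt
  omega

/-- If `A_1, ..., A_s` each have size `r+1`, pairwise intersections of size at
most 1, and their union has size at most `s*r`, then the intersection graph has
at least `s` edges and contains a cycle. -/
theorem stmt_5 {α : Type*} [DecidableEq α] (r s : ℕ) (hr : 0 < r) (hs : 0 < s)
    (A : Fin s → Finset α)
    (hcard : ∀ i, (A i).card = r + 1)
    (hpair : ∀ i j, i ≠ j → (A i ∩ A j).card ≤ 1)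
    (hunion : (Finset.univ.biUnion A).card ≤ s * r)
    (G : SimpleGraph (Fin s)) [Fintype G.edgeSet]
    (hG : ∀ i j, G.Adj i j ↔ i ≠ j ∧ (A i ∩ A j).Nonempty) :
    s ≤ G.edgeFinset.card ∧ ∃ (v : Fin s) (w : G.Walk v v), w.IsCycle :=
  stmt_5_general r s hs A hcard hpair hunion G hG
end

section
/- Let q be a prime power, F_q the field with q elements, d ≥ 5, r ≥ d-2, m a positive integer, and A_1, ..., A_m subsets of F_q each of size r+1, with A_i = {a_{i,1}, ..., a_{i,r+1}}. Form the (m + d - 2) × m(r+1) matrix H over F_q whose column indexed by (i,j) is the concatenation of the i-th standard basis vector e_i ∈ F_q^m with the vector (a_{i,j}, a_{i,j}^2, ..., a_{i,j}^{d-2}). Then any d-1 columns of H are linearly independent if and only if for every subset S ⊆ {1,...,m} with |S| ≤ ⌊(d-1)/2⌋, the union ∪_{i∈S} A_i has size at least r|S| + 1. -/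
/-!
Identify a weighting `c` of the columns with a weighting of the edges of the bipartite graph
joining block `i` to value `a i j`. For `|supp c| ≤ d - 1`, `H c = 0` says exactly that `c` sums
to zero at every vertex: the first `m` rows give the block sums, and the last `d - 2` rows,
together with the total sum, give `d - 1` power moments of the value sums, which then vanish by
Vandermonde. Every vertex touched by such a `c` is touched at least twice, so `c` meets at most
`|supp c| / 2` blocks `S` and values `V`; counting the columns over `S` that miss `supp c` gives
`|⋃_{i ∈ S} A_i| ≤ |S|(r + 1) - |supp c| + |V| ≤ r|S|`. Conversely, if `|⋃_{i ∈ S} A_i| ≤ r|S|`,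
the graph on the columns over `S` has at least as many edges as vertices, hence a cycle; it has
length at most `2|S| ≤ d - 1` and carries a nonzero weighting summing to zero at every vertex.
-/

open Finset Finsupp

theorem Finset.two_mul_card_image_le {α β : Type*} [DecidableEq β] {s : Finset α} {f : α → β}
    (h : ∀ a ∈ s, ∃ b ∈ s, b ≠ a ∧ f b = f a) : 2 * #(s.image f) ≤ #s := by
  refine s.mul_card_image_le_card 2 fun y hy => ?_
  obtain ⟨a, ha, rfl⟩ := mem_image.1 hy
  obtain ⟨b, hb, hba, hfb⟩ := h a ha
  exact one_lt_card.2 ⟨b, by simp [hb, hfb], a, by simp [ha], hba⟩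

theorem Finset.card_image_le_card_sdiff_add {α β : Type*} [DecidableEq α] [DecidableEq β]
    {s t : Finset α} (hst : s ⊆ t) (f : α → β) : #(t.image f) ≤ #(t \ s) + #(s.image f) := by
  calc #(t.image f) = #((t \ s).image f ∪ s.image f) := by
        rw [← image_union, sdiff_union_of_subset hst]
    _ ≤ #((t \ s).image f) + #(s.image f) := card_union_le _ _
    _ ≤ #(t \ s) + #(s.image f) := by gcongr; exact card_image_le

/-- Read `s` as the edges of a bipartite graph, `a ∈ s` joining `f a` to `g a`: a minimal
`t ⊆ s` with at least as many edges as vertices is a cycle. -/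
theorem Finset.exists_subset_card_le_two_mul_card_image {α β γ : Type*} [DecidableEq α]
    [DecidableEq β] [DecidableEq γ] {s : Finset α} (f : α → β) (g : α → γ) (hs : s.Nonempty)
    (h : #(s.image f) + #(s.image g) ≤ #s) :
    ∃ t ⊆ s, t.Nonempty ∧ #(t.image f) + #(t.image g) ≤ #t ∧ #t ≤ 2 * #(t.image f) := by
  obtain ⟨t, ht, hmin⟩ := (s.powerset.filter fun t =>
    t.Nonempty ∧ #(t.image f) + #(t.image g) ≤ #t).exists_min_image card ⟨s, by simp [hs, h]⟩
  simp only [mem_filter, mem_powerset] at ht hmin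
  obtain ⟨hts, htne, htcard⟩ := ht
  have himage : 1 ≤ #(t.image f) ∧ 1 ≤ #(t.image g) :=
    ⟨card_pos.2 (htne.image f), card_pos.2 (htne.image g)⟩
  have herase : ∀ a ∈ t, #t ≤ #((t.erase a).image f) + #((t.erase a).image g) := by
    intro a ha
    by_contra! hlt
    have hne : (t.erase a).Nonempty := by
      rw [← card_pos, card_erase_of_mem ha]; omega
    have := hmin (t.erase a) ⟨(erase_subset a t).trans hts, hne, by
      rw [card_erase_of_mem ha]; omega⟩
    rw [card_erase_of_mem ha] at this
    omega
  have hg : 2 * #(t.image g) ≤ #t := by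
    refine two_mul_card_image_le fun a ha => ?_
    by_contra! hne
    have hsub : (t.erase a).image g ⊆ (t.image g).erase (g a) := by
      intro y hy
      obtain ⟨b, hb, rfl⟩ := mem_image.1 hy
      exact mem_erase.2 ⟨hne b (mem_of_mem_erase hb) (ne_of_mem_erase hb),
        mem_image_of_mem g (mem_of_mem_erase hb)⟩
    have hgle := card_le_card hsub
    rw [card_erase_of_mem (mem_image_of_mem g ha)] at hgle
    have hfle := card_le_card (image_subset_image (f := f) (erase_subset a t))
    have := herase a ha
    omega
  obtain ⟨a, ha⟩ := htne
  have := herase a ha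
  have hfle := card_le_card (image_subset_image (f := f) (erase_subset a t))
  have hgle := card_le_card (image_subset_image (f := g) (erase_subset a t))
  exact ⟨t, hts, ⟨a, ha⟩, htcard, by omega⟩

theorem Finsupp.exists_ne_apply_eq_of_mapDomain_eq_zero {α β M : Type*} [AddCommMonoid M]
    {f : α → β} {c : α →₀ M} (h : c.mapDomain f = 0) {a : α} (ha : a ∈ c.support) :
    ∃ b ∈ c.support, b ≠ a ∧ f b = f a := by
  by_contra! hne
  have : c.mapDomain f (f a) = c a := by
    rw [mapDomain, Finsupp.sum_apply, Finsupp.sum, Finset.sum_eq_single a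
      (fun b hb hba => single_eq_of_ne (hne b hb hba).symm) (fun h' => absurd ha h'),
      single_eq_same]
  exact mem_support_iff.1 ha (by rw [← this, h, zero_apply])

/-- Both push-forwards of `c` have total mass `∑ a, c a`, so vanishing of one of them forces the
last coordinate of the other. -/
theorem Finsupp.mapDomain_eq_zero_of_forall_ne {α β γ M : Type*} [AddCommMonoid M]
    {f : α → β} {g : α → γ} {c : α →₀ M} (hg : c.mapDomain g = 0) {b : β}
    (hf : ∀ b' ≠ b, c.mapDomain f b' = 0) : c.mapDomain f = 0 := by
  have hb : c.mapDomain f b = 0 := by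
    rw [← (c.mapDomain f).sum_eq_single b (g := fun _ x => x) (fun b' _ hb' => hf b' hb')
      (fun _ => rfl), sum_mapDomain_index (fun _ => rfl) (fun _ _ _ => rfl),
      ← sum_mapDomain_index (f := g) (h := fun _ x => x) (fun _ => rfl) (fun _ _ _ => rfl), hg,
      sum_zero_index]
  ext b'
  rcases eq_or_ne b' b with rfl | hb'
  exacts [hb, hf b' hb']

theorem Finsupp.eq_zero_of_linearCombination_pow_eq_zero {R : Type*} [CommRing R] [IsDomain R]
    {μ : R →₀ R} {n : ℕ} (hμ : #μ.support ≤ n)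
    (h : ∀ k < n, linearCombination R (· ^ k) μ = 0) : μ = 0 := by
  set e := μ.support.equivFin.symm
  have hv := Matrix.eq_zero_of_vecMul_eq_zero (v := fun i => μ (e i))
    (Matrix.det_vandermonde_ne_zero_iff.2 (Subtype.val_injective.comp e.injective)) <| funext
    fun j => by
      have := h j (j.2.trans_le hμ)
      rw [linearCombination_apply, Finsupp.sum, ← sum_coe_sort, ← e.sum_comp] at this
      simpa [Matrix.vecMul, dotProduct] using this
  ext x
  by_contra hx
  exact hx (by simpa using congrFun hv (e.symm ⟨x, mem_support_iff.2 hx⟩))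

theorem Finsupp.eq_zero_of_forall_card_eq_linearIndepOn {ι R M : Type*} [Fintype ι] [Ring R]
    [AddCommGroup M] [Module R M] {v : ι → M} {n : ℕ}
    (hv : ∀ T : Finset ι, #T = n → LinearIndepOn R v T) (hn : n ≤ Fintype.card ι)
    {c : ι →₀ R} (hc : #c.support ≤ n) (h0 : linearCombination R v c = 0) : c = 0 := by
  obtain ⟨T, hcT, hT⟩ := exists_superset_card_eq hc hn
  exact linearIndepOn_iff.1 (hv T hT) c ((mem_supported R c).2 (by exact_mod_cast hcT)) h0

theorem Finset.biUnion_image_univ_eq_image_product {α β γ : Type*} [Fintype β] [DecidableEq γ]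
    (a : α → β → γ) (S : Finset α) :
    S.biUnion (fun i => univ.image (a i)) = (S ×ˢ univ).image (Function.uncurry a) := by
  ext x
  simp [eq_comm]

namespace ParityCheck

variable {ι G F : Type*} [Field F]

/-- The weightings summing to zero at every vertex of the bipartite graph in which column `p`
joins the block `g p` to the value `v p`. -/
noncomputable def balanced (g : ι → G) (v : ι → F) : Submodule F (ι →₀ F) :=
  LinearMap.ker (lmapDomain F F g) ⊓ LinearMap.ker (lmapDomain F F v)

theorem mem_balanced {g : ι → G} {v : ι → F} {c : ι →₀ F} :
    c ∈ balanced g v ↔ c.mapDomain g = 0 ∧ c.mapDomain v = 0 :=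
  Iff.rfl

noncomputable def vandermondeCol [DecidableEq G] (g : ι → G) (v : ι → F) (n : ℕ) (p : ι) :
    G ⊕ Fin n → F :=
  Sum.elim (fun i => if i = g p then 1 else 0) (fun l => v p ^ ((l : ℕ) + 1))

section Columns

variable [DecidableEq G] {g : ι → G} {v : ι → F} {n : ℕ}

theorem linearCombination_vandermondeCol_inl (c : ι →₀ F) (i : G) :
    linearCombination F (vandermondeCol g v n) c (Sum.inl i) = c.mapDomain g i := by
  simp [linearCombination_apply, Finsupp.sum, Finset.sum_apply, vandermondeCol, mapDomain,
    single_apply, eq_comm]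

theorem linearCombination_vandermondeCol_inr (c : ι →₀ F) (l : Fin n) :
    linearCombination F (vandermondeCol g v n) c (Sum.inr l) =
      linearCombination F (· ^ ((l : ℕ) + 1)) (c.mapDomain v) := by
  rw [linearCombination_mapDomain]
  simp [linearCombination_apply, Finsupp.sum, Finset.sum_apply, vandermondeCol]

theorem linearCombination_vandermondeCol_eq_zero_iff {c : ι →₀ F} (hc : #c.support ≤ n + 1) :
    linearCombination F (vandermondeCol g v n) c = 0 ↔ c ∈ balanced g v := by
  classical
  refine ⟨fun h => ?_, fun hc => ?_⟩
  · have hg : c.mapDomain g = 0 := by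
      ext i
      rw [← linearCombination_vandermondeCol_inl, h, Pi.zero_apply, Finsupp.zero_apply]
    refine mem_balanced.2 ⟨hg, eq_zero_of_linearCombination_pow_eq_zero
      ((card_le_card mapDomain_support).trans (card_image_le.trans hc)) fun k hk => ?_⟩
    cases k with
    | zero =>
      simpa [linearCombination_mapDomain, Function.comp_def] using
        congrArg (linearCombination F fun _ => (1 : F)) hg
    | succ l =>
      rw [← linearCombination_vandermondeCol_inr (g := g) (n := n) c ⟨l, by omega⟩, h,
        Pi.zero_apply]
  · obtain ⟨hg, hv⟩ := mem_balanced.1 hc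
    ext (i | l)
    · rw [linearCombination_vandermondeCol_inl, hg, Finsupp.zero_apply, Pi.zero_apply]
    · rw [linearCombination_vandermondeCol_inr, hv, map_zero, Pi.zero_apply]

end Columns

theorem exists_ne_zero_mem_balanced [DecidableEq G] [DecidableEq F] {g : ι → G} {v : ι → F}
    {Q : Finset ι} (hQ : Q.Nonempty) (h : #(Q.image g) + #(Q.image v) ≤ #Q) :
    ∃ c ∈ balanced g v, c ≠ 0 ∧ c.support ⊆ Q := by
  obtain ⟨i₀, hi₀⟩ := hQ.image g
  -- The block sum at `i₀` follows from the others by `mapDomain_eq_zero_of_forall_ne`.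
  let incl : ((Q : Set ι) →₀ F) →ₗ[F] ι →₀ F :=
    (supported F F (Q : Set ι)).subtype ∘ₗ (supportedEquivFinsupp (Q : Set ι)).symm.toLinearMap
  let Ψ : ((Q : Set ι) →₀ F) →ₗ[F] ((Q.image g).erase i₀ → F) × (Q.image v → F) :=
    (LinearMap.prod (LinearMap.pi fun i => lapply i.1 ∘ₗ lmapDomain F F g)
      (LinearMap.pi fun x => lapply x.1 ∘ₗ lmapDomain F F v)) ∘ₗ incl
  have hΨ : LinearMap.ker Ψ ≠ ⊥ := by
    apply LinearMap.ker_ne_bot_of_finrank_lt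
    rw [Module.finrank_prod, Module.finrank_fintype_fun_eq_card,
      Module.finrank_fintype_fun_eq_card, Module.finrank_finsupp_self]
    simp only [Fintype.card_coe, card_erase_of_mem hi₀, coe_sort_coe]
    have := card_pos.2 (hQ.image g)
    omega
  obtain ⟨z, hker, hz0⟩ := Submodule.exists_mem_ne_zero_of_ne_bot hΨ
  set c := incl z
  have hcQ : c.support ⊆ Q := by exact_mod_cast (mem_supported F c).1 (Subtype.prop _)
  have hv : c.mapDomain v = 0 := by
    ext x
    by_cases hx : x ∈ Q.image v
    · exact congrFun (congrArg Prod.snd (LinearMap.mem_ker.1 hker)) ⟨x, hx⟩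
    · exact notMem_support_iff.1 fun hx' => hx (image_subset_image hcQ (mapDomain_support hx'))
  have hg : c.mapDomain g = 0 := by
    refine mapDomain_eq_zero_of_forall_ne hv (b := i₀) fun i hi => ?_
    by_cases hig : i ∈ Q.image g
    · exact congrFun (congrArg Prod.fst (LinearMap.mem_ker.1 hker)) ⟨i, mem_erase.2 ⟨hi, hig⟩⟩
    · exact notMem_support_iff.1 fun hi' => hig (image_subset_image hcQ (mapDomain_support hi'))
  refine ⟨c, mem_balanced.2 ⟨hg, hv⟩, fun hc0 => hz0 ?_, hcQ⟩
  simpa [c, incl] using hc0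

section Blocks

variable {F : Type*} [Field F] [DecidableEq F] {m r : ℕ} (a : Fin m → Fin (r + 1) → F)

theorem exists_ne_zero_mem_balanced_card_support_le {S : Finset (Fin m)} (hS : S.Nonempty)
    (hU : #(S.biUnion fun i => univ.image (a i)) ≤ r * #S) :
    ∃ c ∈ balanced Prod.fst (Function.uncurry a), c ≠ 0 ∧ #c.support ≤ 2 * #S := by
  have hfst : (S ×ˢ (univ : Finset (Fin (r + 1)))).image Prod.fst = S :=
    product_image_fst univ_nonempty
  obtain ⟨Q, hQS, hQ, hQcard, hQ2⟩ := exists_subset_card_le_two_mul_card_image Prod.fst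
    (Function.uncurry a) (hS.product univ_nonempty) <| by
      rw [hfst, ← biUnion_image_univ_eq_image_product, card_product, card_univ, Fintype.card_fin]
      linarith
  obtain ⟨c, hc, hc0, hcQ⟩ := exists_ne_zero_mem_balanced hQ hQcard
  refine ⟨c, hc, hc0, ?_⟩
  calc #c.support ≤ #Q := card_le_card hcQ
    _ ≤ 2 * #(Q.image Prod.fst) := hQ2
    _ ≤ 2 * #S := by grw [← hfst, image_subset_image hQS]

theorem lt_card_support_of_mem_balanced {k : ℕ}
    (hA : ∀ S : Finset (Fin m), S.Nonempty → #S ≤ k →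
      r * #S + 1 ≤ #(S.biUnion fun i => univ.image (a i)))
    {c : Fin m × Fin (r + 1) →₀ F} (hc : c ∈ balanced Prod.fst (Function.uncurry a))
    (hc0 : c ≠ 0) : 2 * k + 1 < #c.support := by
  obtain ⟨hg, hv⟩ := mem_balanced.1 hc
  set S := c.support.image Prod.fst
  have hS : 2 * #S ≤ #c.support :=
    two_mul_card_image_le fun _ hp => exists_ne_apply_eq_of_mapDomain_eq_zero hg hp
  have hV : 2 * #(c.support.image (Function.uncurry a)) ≤ #c.support :=
    two_mul_card_image_le fun _ hp => exists_ne_apply_eq_of_mapDomain_eq_zero hv hp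
  have hcS : c.support ⊆ S ×ˢ univ := fun p hp =>
    mem_product.2 ⟨mem_image_of_mem _ hp, mem_univ _⟩
  by_contra! hcard
  have hU := hA S ((support_nonempty_iff.2 hc0).image _) (by omega)
  have hprod : #(S ×ˢ (univ : Finset (Fin (r + 1)))) = r * #S + #S := by
    rw [card_product, card_univ, Fintype.card_fin]
    ring
  have hUS := card_image_le_card_sdiff_add hcS (Function.uncurry a)
  rw [← biUnion_image_univ_eq_image_product, card_sdiff_of_subset hcS, hprod] at hUS
  have := card_le_card hcS
  rw [hprod] at this
  omega

end Blocks

end ParityCheck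

open ParityCheck

theorem stmt_6_general {F : Type*} [Field F] [DecidableEq F]
    (d r m : ℕ) (hr : d - 2 ≤ r)
    (a : Fin m → Fin (r + 1) → F)
    (col : Fin m × Fin (r + 1) → (Fin m ⊕ Fin (d - 2)) → F)
    (hcol : ∀ p, col p = Sum.elim
      (fun i => if i = p.1 then (1 : F) else 0)
      (fun (l : Fin (d - 2)) => a p.1 p.2 ^ ((l : ℕ) + 1))) :
    (∀ T : Finset (Fin m × Fin (r + 1)), T.card = d - 1 →
        LinearIndependent F (fun p : {x // x ∈ T} => col p.1)) ↔
      (∀ S : Finset (Fin m), S.Nonempty → S.card ≤ (d - 1) / 2 →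
        r * S.card + 1 ≤ (S.biUnion (fun i => Finset.univ.image (a i))).card) := by
  obtain rfl : col = vandermondeCol Prod.fst (Function.uncurry a) (d - 2) := funext hcol
  constructor
  · intro hLI S hS hSd
    by_contra! hU
    obtain ⟨c, hc, hc0, hcard⟩ :=
      exists_ne_zero_mem_balanced_card_support_le a hS (Nat.lt_succ_iff.1 hU)
    have hcd : #c.support ≤ d - 1 := by omega
    have hm : d - 1 ≤ Fintype.card (Fin m × Fin (r + 1)) := by
      obtain ⟨i, -⟩ := hS
      calc d - 1 ≤ r + 1 := by omega
        _ ≤ Fintype.card (Fin m × Fin (r + 1)) := by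
          simpa using Nat.le_mul_of_pos_left (r + 1) i.pos
    exact hc0 (eq_zero_of_forall_card_eq_linearIndepOn hLI hm hcd
      ((linearCombination_vandermondeCol_eq_zero_iff (by omega)).2 hc))
  · intro hA T hT
    refine linearIndepOn_iff.2 fun c hcT h0 => ?_
    by_contra hc0
    have hcd : #c.support ≤ d - 1 :=
      hT ▸ card_le_card (by exact_mod_cast (mem_supported F c).1 hcT)
    have := lt_card_support_of_mem_balanced a hA
      ((linearCombination_vandermondeCol_eq_zero_iff (by omega)).1 h0) hc0
    omega

/-- Criterion: any `d-1` columns of the Vandermonde-structured parity-check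
matrix `H` are linearly independent iff every nonempty collection of at most
`⌊(d-1)/2⌋` of the sets `A_i` covers at least `r|S| + 1` elements. -/
theorem stmt_6 {F : Type*} [Field F] [Fintype F] [DecidableEq F]
    (d r m : ℕ) (hd : 5 ≤ d) (hr : d - 2 ≤ r) (hm : 0 < m)
    (a : Fin m → Fin (r + 1) → F)
    (hinj : ∀ i, Function.Injective (a i))
    (col : Fin m × Fin (r + 1) → (Fin m ⊕ Fin (d - 2)) → F)
    (hcol : ∀ p, col p = Sum.elim
      (fun i => if i = p.1 then (1 : F) else 0)
      (fun (l : Fin (d - 2)) => a p.1 p.2 ^ ((l : ℕ) + 1))) :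
    (∀ T : Finset (Fin m × Fin (r + 1)), T.card = d - 1 →
        LinearIndependent F (fun p : {x // x ∈ T} => col p.1)) ↔
      (∀ S : Finset (Fin m), S.Nonempty → S.card ≤ (d - 1) / 2 →
        r * S.card + 1 ≤ (S.biUnion (fun i => Finset.univ.image (a i))).card) :=
  stmt_6_general d r m hr a col hcol
end

section
/- Let H = (X, E) be an (r+1)-uniform hypergraph. Then the following are equivalent: (1) for every collection of k ≤ t distinct hyperedges A_{i_1}, ..., A_{i_k} ∈ E, one has |A_{i_1} ∪ ... ∪ A_{i_k}| ≥ rk + 1; (2) H contains no Berge ℓ-cycle for any 2 ≤ ℓ ≤ t. -/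
/-!
Along a Berge `ℓ`-cycle the vertex `v i` of `e i` lies again in `e (i + 1)`, so the `ℓ` edges of
the cycle cover at most `rℓ` vertices.

Conversely, suppose a family `S` of edges contains no Berge cycle of length at most `|S|`. If every
edge of `S` met the union of the others in two vertices, a longest Berge path in `S` could leave
its last edge through a vertex other than the one it entered by; that vertex closes a cycle if it
lies on the path or in one of its edges, and extends the path otherwise. So some edge meets the
rest in at most one vertex, removing it loses at least `r` vertices, and induction on `|S|`
gives `|⋃ S| ≥ r|S| + 1`.
-/

/-- A Berge `ℓ`-cycle in a hypergraph with edge set `E`: `ℓ` distinct vertices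
and `ℓ` distinct hyperedges with `{v_{i-1}, v_i} ⊆ e_i` cyclically. -/
def HasBergeCycle {X : Type*} (E : Finset (Finset X)) (ℓ : ℕ) : Prop :=
  ∃ (v : ZMod ℓ → X) (e : ZMod ℓ → Finset X),
    Function.Injective v ∧ Function.Injective e ∧ (∀ i, e i ∈ E) ∧
    ∀ i : ZMod ℓ, v (i - 1) ∈ e i ∧ v i ∈ e i

open Finset

section

variable {X : Type*} {S T : Finset (Finset X)} {ℓ n : ℕ}

theorem HasBergeCycle.mono (hST : S ⊆ T) (h : HasBergeCycle S ℓ) : HasBergeCycle T ℓ := by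
  obtain ⟨v, e, hv, he, heS, hve⟩ := h
  exact ⟨v, e, hv, he, fun i => hST (heS i), hve⟩

theorem hasBergeCycle_of_injOn [NeZero ℓ] {u : ℕ → X} {g : ℕ → Finset X}
    (hu : Set.InjOn u (Set.Iio ℓ)) (hg : Set.InjOn g (Set.Iio ℓ)) (hgS : ∀ m < ℓ, g m ∈ S)
    (hug : ∀ m < ℓ, u m ∈ g m ∧ u m ∈ g ((m + 1) % ℓ)) : HasBergeCycle S ℓ := by
  refine ⟨fun i => u i.val, fun i => g i.val,
    fun a b h => ZMod.val_injective ℓ (hu (ZMod.val_lt a) (ZMod.val_lt b) h),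
    fun a b h => ZMod.val_injective ℓ (hg (ZMod.val_lt a) (ZMod.val_lt b) h),
    fun i => hgS _ (ZMod.val_lt i), fun i => ⟨?_, (hug _ (ZMod.val_lt i)).1⟩⟩
  have hval : (i - 1 + 1).val = ((i - 1).val + 1) % ℓ := by
    rw [ZMod.val_add, ZMod.val_one_eq_one_mod, Nat.add_mod_mod]
  have := (hug _ (ZMod.val_lt (i - 1))).2
  rwa [← hval, sub_add_cancel] at this

/-- The edges of the path are `A 0, …, A (n - 1)`, and the vertex `v p` joins `A p` to
`A (p + 1)`. -/
structure IsBergePath (S : Finset (Finset X)) (n : ℕ) (A : ℕ → Finset X) (v : ℕ → X) : Prop where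
  edge_mem : ∀ p < n, A p ∈ S
  injOn_edge : Set.InjOn A (Set.Iio n)
  injOn_vertex : Set.InjOn v (Set.Iio (n - 1))
  vertex_mem_edge : ∀ p, p + 1 < n → v p ∈ A p
  vertex_mem_edge_succ : ∀ p, p + 1 < n → v p ∈ A (p + 1)

namespace IsBergePath

variable {A : ℕ → Finset X} {v : ℕ → X}

theorem le_card (hP : IsBergePath S n A v) : n ≤ #S := by
  simpa using card_le_card_of_injOn A (s := range n) (fun p hp => hP.edge_mem p (by simpa using hp))
    (by simpa using hP.injOn_edge)

theorem drop (hP : IsBergePath S n A v) (k : ℕ) :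
    IsBergePath S (n - k) (fun m => A (k + m)) (fun m => v (k + m)) where
  edge_mem p hp := hP.edge_mem _ (by omega)
  injOn_edge a (ha : a < n - k) b (hb : b < n - k) h := by
    have := hP.injOn_edge (show k + a < n by omega) (show k + b < n by omega) h
    omega
  injOn_vertex a (ha : a < n - k - 1) b (hb : b < n - k - 1) h := by
    have := hP.injOn_vertex (show k + a < n - 1 by omega) (show k + b < n - 1 by omega) h
    omega
  vertex_mem_edge p hp := hP.vertex_mem_edge _ (by omega)
  vertex_mem_edge_succ p hp := hP.vertex_mem_edge_succ (k + p) (by omega)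

theorem hasBergeCycle_of_mem_last_of_mem_first (hP : IsBergePath S n A v) (hn : 2 ≤ n) {w : X}
    (hw_last : w ∈ A (n - 1)) (hw_first : w ∈ A 0) (hwv : ∀ p, p + 1 < n → v p ≠ w) :
    HasBergeCycle S n := by
  have : NeZero n := ⟨by omega⟩
  refine hasBergeCycle_of_injOn (u := fun m => if m + 1 < n then v m else w) ?_ hP.injOn_edge
    hP.edge_mem fun m hm => ?_
  · intro a (ha : a < n) b (hb : b < n) h
    dsimp only at h
    split_ifs at h with h1 h2 h2
    · exact hP.injOn_vertex (show a < n - 1 by omega) (show b < n - 1 by omega) h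
    · exact absurd h (hwv a h1)
    · exact absurd h.symm (hwv b h2)
    · omega
  · split_ifs with h
    · rw [Nat.mod_eq_of_lt h]
      exact ⟨hP.vertex_mem_edge m h, hP.vertex_mem_edge_succ m h⟩
    · obtain rfl : m = n - 1 := by omega
      rw [Nat.sub_add_cancel (by omega), Nat.mod_self]
      exact ⟨hw_last, hw_first⟩

theorem extend (hP : IsBergePath S n A v) (hn : 1 ≤ n) {B : Finset X} {x : X} (hB : B ∈ S)
    (hBA : ∀ p < n, A p ≠ B) (hxA : x ∈ A (n - 1)) (hxB : x ∈ B)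
    (hxv : ∀ p, p + 1 < n → v p ≠ x) :
    IsBergePath S (n + 1) (Function.update A n B) (Function.update v (n - 1) x) where
  edge_mem p hp := by
    rw [Function.update_apply]
    split_ifs with h
    · exact hB
    · exact hP.edge_mem p (by omega)
  injOn_edge a (ha : a < n + 1) b (hb : b < n + 1) h := by
    simp only [Function.update_apply] at h
    split_ifs at h with h1 h2 h2
    · omega
    · exact absurd h.symm (hBA b (by omega))
    · exact absurd h (hBA a (by omega))
    · exact hP.injOn_edge (show a < n by omega) (show b < n by omega) h
  injOn_vertex a (ha : a < n + 1 - 1) b (hb : b < n + 1 - 1) h := by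
    simp only [Function.update_apply] at h
    split_ifs at h with h1 h2 h2
    · omega
    · exact absurd h.symm (hxv b (by omega))
    · exact absurd h (hxv a (by omega))
    · exact hP.injOn_vertex (show a < n - 1 by omega) (show b < n - 1 by omega) h
  vertex_mem_edge p hp := by
    rw [Function.update_of_ne (show p ≠ n by omega), Function.update_apply]
    split_ifs with h
    · exact h ▸ hxA
    · exact hP.vertex_mem_edge p (by omega)
  vertex_mem_edge_succ p hp := by
    simp only [Function.update_apply]
    split_ifs with h1 h2 h2
    · exact hxB
    · omega
    · omega
    · exact hP.vertex_mem_edge_succ p (by omega)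

end IsBergePath

theorem isBergePath_one {A₀ : Finset X} (hA₀ : A₀ ∈ S) (v : ℕ → X) :
    IsBergePath S 1 (fun _ => A₀) v where
  edge_mem _ _ := hA₀
  injOn_edge a (ha : a < 1) b (hb : b < 1) _ := by omega
  injOn_vertex a (ha : a < 0) := by omega
  vertex_mem_edge p hp := by omega
  vertex_mem_edge_succ p hp := by omega

variable [DecidableEq X]

namespace IsBergePath

theorem exists_hasBergeCycle_or_extend {A : ℕ → Finset X} {v : ℕ → X} (hP : IsBergePath S n A v) (hn : 1 ≤ n)
    (hlast : 1 < #(A (n - 1) ∩ (S.erase (A (n - 1))).biUnion id)) :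
    (∃ ℓ, 2 ≤ ℓ ∧ ℓ ≤ n ∧ HasBergeCycle S ℓ) ∨ ∃ A' v', IsBergePath S (n + 1) A' v' := by
  -- `v (n - 2)` is the vertex by which the path enters its last edge (irrelevant when `n = 1`)
  obtain ⟨x, hx, hxv⟩ := (one_lt_card_iff_nontrivial.1 hlast).exists_ne (v (n - 2))
  obtain ⟨hxA, B, hB, hxB : x ∈ B⟩ := by simpa only [mem_inter, mem_biUnion] using hx
  obtain ⟨hBA, hBS⟩ := mem_erase.1 hB
  by_cases hxold : ∃ q, q + 1 < n ∧ v q = x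
  · obtain ⟨q, hq, rfl⟩ := hxold
    have hq2 : q + 2 < n := by
      by_contra
      exact hxv (congrArg v (by omega))
    refine .inl ⟨n - (q + 1), by omega, by omega,
      (hP.drop (q + 1)).hasBergeCycle_of_mem_last_of_mem_first (by omega) ?_
        (hP.vertex_mem_edge_succ q hq) fun p hp h => ?_⟩
    · convert hxA using 2
      omega
    · have := hP.injOn_vertex (show q + 1 + p < n - 1 by omega) (show q < n - 1 by omega) h
      omega
  push Not at hxold
  by_cases hBold : ∃ p < n, A p = B
  · obtain ⟨p, hp, rfl⟩ := hBold
    have hp1 : p + 1 < n := by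
      by_contra
      exact hBA (congrArg A (by omega))
    refine .inl ⟨n - p, by omega, by omega,
      (hP.drop p).hasBergeCycle_of_mem_last_of_mem_first (by omega) ?_ hxB
        fun q hq => hxold (p + q) (by omega)⟩
    convert hxA using 2
    omega
  push Not at hBold
  exact .inr ⟨_, _, hP.extend hn hBS hBold hxA hxB hxold⟩

theorem exists_hasBergeCycle (hS2 : ∀ B ∈ S, 1 < #(B ∩ (S.erase B).biUnion id))
    {n : ℕ} {A : ℕ → Finset X} {v : ℕ → X} (hP : IsBergePath S n A v) (hn : 1 ≤ n) :
    ∃ ℓ, 2 ≤ ℓ ∧ ℓ ≤ #S ∧ HasBergeCycle S ℓ := by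
  obtain ⟨ℓ, hℓ, hℓn, hcycle⟩ | ⟨A', v', hP'⟩ :=
    hP.exists_hasBergeCycle_or_extend hn (hS2 _ (hP.edge_mem _ (by omega)))
  · exact ⟨ℓ, hℓ, hℓn.trans hP.le_card, hcycle⟩
  · exact exists_hasBergeCycle hS2 hP' (by omega)
termination_by #S - n
decreasing_by have := hP'.le_card; omega

end IsBergePath

theorem exists_hasBergeCycle_of_one_lt_card_inter (hS : S.Nonempty)
    (hS2 : ∀ A ∈ S, 1 < #(A ∩ (S.erase A).biUnion id)) :
    ∃ ℓ, 2 ≤ ℓ ∧ ℓ ≤ #S ∧ HasBergeCycle S ℓ := by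
  obtain ⟨A₀, hA₀⟩ := hS
  obtain ⟨x₀, -⟩ := card_pos.1 (zero_lt_one.trans (hS2 A₀ hA₀))
  exact (isBergePath_one hA₀ fun _ => x₀).exists_hasBergeCycle hS2 le_rfl

variable {r : ℕ}

theorem HasBergeCycle.exists_card_biUnion_le (huniform : ∀ e ∈ S, #e = r + 1) (hℓ : 2 ≤ ℓ)
    (h : HasBergeCycle S ℓ) : ∃ T ⊆ S, #T = ℓ ∧ #(T.biUnion id) ≤ r * ℓ := by
  obtain ⟨v, e, hv, he, heS, hve⟩ := h
  have : NeZero ℓ := ⟨by omega⟩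
  have : Fact (1 < ℓ) := ⟨by omega⟩
  refine ⟨univ.image e, by simpa [subset_iff] using heS, by simp [card_image_of_injective _ he], ?_⟩
  have hcover : (univ.image e).biUnion id ⊆ univ.biUnion fun i => (e i).erase (v i) := by
    simp only [image_biUnion, subset_iff, mem_biUnion, mem_univ, true_and, id, mem_erase]
    intro x ⟨i, hxi⟩
    by_cases hx : x = v i
    · subst hx
      refine ⟨i + 1, fun h => one_ne_zero (left_eq_add.1 (hv h)), ?_⟩
      simpa using (hve (i + 1)).1
    · exact ⟨i, hx, hxi⟩
  calc #((univ.image e).biUnion id)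
      ≤ #(univ.biUnion fun i => (e i).erase (v i)) := card_le_card hcover
    _ ≤ ∑ i, #((e i).erase (v i)) := card_biUnion_le
    _ = r * ℓ := by simp [card_erase_of_mem (hve _).2, huniform _ (heS _), mul_comm]

theorem mul_card_add_one_le_card_biUnion (huniform : ∀ e ∈ S, #e = r + 1) (hS : S.Nonempty)
    (hacyclic : ∀ ℓ, 2 ≤ ℓ → ℓ ≤ #S → ¬ HasBergeCycle S ℓ) :
    r * #S + 1 ≤ #(S.biUnion id) := by
  induction S using Finset.strongInduction with
  | H S ih =>
  obtain ⟨A, hA, hAU⟩ : ∃ A ∈ S, #(A ∩ (S.erase A).biUnion id) ≤ 1 := by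
    by_contra! h
    obtain ⟨ℓ, hℓ, hℓS, hcycle⟩ := exists_hasBergeCycle_of_one_lt_card_inter hS h
    exact hacyclic ℓ hℓ hℓS hcycle
  rcases (S.erase A).eq_empty_or_nonempty with hempty | hne
  · obtain rfl : S = {A} := ((erase_eq_empty_iff S A).1 hempty).resolve_left hS.ne_empty
    simp [huniform A hA]
  have hU := ih (S.erase A) (erase_ssubset hA) (fun e he => huniform e (mem_of_mem_erase he)) hne
    fun ℓ hℓ hℓS hcycle => hacyclic ℓ hℓ (hℓS.trans card_erase_le) (hcycle.mono (erase_subset A S))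
  have hsplit : S.biUnion id = A ∪ (S.erase A).biUnion id := by
    conv_lhs => rw [← insert_erase hA]
    exact biUnion_insert
  have hunion := card_union_add_card_inter A ((S.erase A).biUnion id)
  obtain ⟨k, hk⟩ := Nat.exists_eq_add_one_of_ne_zero hS.card_pos.ne'
  rw [card_erase_of_mem hA, hk, Nat.add_sub_cancel] at hU
  rw [hsplit, hk, mul_add_one]
  have := huniform A hA
  omega

end

theorem stmt_9_general {X : Type*} [DecidableEq X] (r t : ℕ)
    (E : Finset (Finset X)) (huniform : ∀ e ∈ E, e.card = r + 1) :
    (∀ S : Finset (Finset X), S ⊆ E → S.Nonempty → S.card ≤ t →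
        r * S.card + 1 ≤ (S.biUnion id).card) ↔
      ∀ ℓ, 2 ≤ ℓ → ℓ ≤ t → ¬ HasBergeCycle E ℓ := by
  refine ⟨fun hsparse ℓ hℓ hℓt hcycle => ?_, fun hacyclic S hSE hS hSt => ?_⟩
  · obtain ⟨S, hSE, hScard, hSunion⟩ := hcycle.exists_card_biUnion_le huniform hℓ
    have := hsparse S hSE (card_pos.1 (by omega)) (by omega)
    rw [hScard] at this
    omega
  · exact mul_card_add_one_le_card_biUnion (fun e he => huniform e (hSE he)) hS
      fun ℓ hℓ hℓS hcycle => hacyclic ℓ hℓ (hℓS.trans hSt) (hcycle.mono hSE)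

/-- In an `(r+1)`-uniform hypergraph, every collection of at most `t` distinct
hyperedges covers at least `rk + 1` vertices (`k` the number of edges) iff the
hypergraph contains no Berge `ℓ`-cycle for any `2 ≤ ℓ ≤ t`. -/
theorem stmt_9 {X : Type*} [DecidableEq X] (r t : ℕ) (hr : 1 ≤ r) (ht : 2 ≤ t)
    (E : Finset (Finset X)) (huniform : ∀ e ∈ E, e.card = r + 1) :
    (∀ S : Finset (Finset X), S ⊆ E → S.Nonempty → S.card ≤ t →
        r * S.card + 1 ≤ (S.biUnion id).card) ↔
      ∀ ℓ, 2 ≤ ℓ → ℓ ≤ t → ¬ HasBergeCycle E ℓ :=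
  stmt_9_general r t E huniform
end

section
/- Let q be a prime power, d ≥ 5, r ≥ d-2, m ≥ 1, t = ⌊(d-1)/2⌋, and suppose A_1, ..., A_m ⊆ F_q each have size r+1 and satisfy |∪_{i∈S} A_i| ≥ r|S| + 1 for all S ⊆ {1,...,m} with |S| ≤ t. Let C ⊆ F_q^{m(r+1)} be the kernel of the matrix H whose columns (indexed by (i,j), 1 ≤ i ≤ m, 1 ≤ j ≤ r+1) are (e_i, a_{i,j}, ..., a_{i,j}^{d-2})^T. Then C has minimum Hamming distance at least d. -/
/-!
Let `x ≠ 0` be a codeword of weight `w ≤ d - 1`, supported on `T`, and let `S` be the set of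
blocks it meets. The rows `e_i` say that `x` sums to zero on each block, so every block of `S`
carries at least two nonzero entries and `2|S| ≤ w`; in particular `|S| ≤ t`. The power rows say
that `∑ x_p a_p ^ l = 0` for `l ≤ d - 2`, and as at most `w ≤ d - 1` distinct values occur, the
Vandermonde determinant forces the entries of `x` sharing a value to sum to zero; so every value
`a_p` with `p ∈ T` occurs at least twice in `T`, and `2|V| ≤ w` for the set `V` of these values.
Counting the `(r + 1)|S|` positions in the blocks of `S`: those outside `T` still cover every
value of `⋃_{i ∈ S} A_i` outside `V`, whence `|⋃_{i ∈ S} A_i| + w ≤ (r + 1)|S| + |V|`. With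
`w ≥ |S| + |V|` this gives `|⋃_{i ∈ S} A_i| ≤ r|S|`, contradicting the covering hypothesis.
-/

open Finset

namespace Finset

variable {ι α M : Type*}

theorem one_lt_card_of_sum_eq_zero [AddCommMonoid M] {s : Finset ι} {x : ι → M}
    (hs : s.Nonempty) (hx : ∀ p ∈ s, x p ≠ 0) (hsum : ∑ p ∈ s, x p = 0) : 1 < #s := by
  obtain ⟨p, rfl⟩ | hnt := hs.exists_eq_singleton_or_nontrivial
  · exact absurd (by simpa using hsum) (hx p (mem_singleton_self p))
  · exact one_lt_card_iff_nontrivial.mpr hnt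

theorem card_image_add_card_le [DecidableEq ι] [DecidableEq α] {P T : Finset ι} (f : ι → α)
    (hTP : T ⊆ P) : #(P.image f) + #T ≤ #P + #(T.image f) := by
  have hcover : P.image f ⊆ (P \ T).image f ∪ T.image f := by
    rw [← image_union, sdiff_union_of_subset hTP]
  have := (card_le_card hcover).trans (card_union_le _ _)
  have := card_image_le (s := P \ T) (f := f)
  have := card_sdiff_of_subset hTP
  have := card_le_card hTP
  omega

theorem eq_zero_of_forall_sum_mul_pow_eq_zero {R : Type*} [CommRing R] [IsDomain R]
    (V : Finset R) {y : R → R} (h : ∀ l < #V, ∑ b ∈ V, y b * b ^ l = 0) : ∀ b ∈ V, y b = 0 := by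
  set e := V.equivFin
  have hsum : ∀ g : R → R, ∑ k, g (e.symm k) = ∑ b ∈ V, g b := fun g => by
    rw [← sum_coe_sort V g]; exact e.symm.sum_comp (fun b => g b)
  have hzero := Matrix.eq_zero_of_forall_pow_sum_mul_pow_eq_zero
    (f := fun k => (e.symm k : R)) (v := fun k => y (e.symm k))
    (Subtype.val_injective.comp e.symm.injective)
    fun l => (hsum fun b => y b * b ^ (l : ℕ)).trans (h l l.isLt)
  intro b hb
  simpa using congrFun hzero (e ⟨b, hb⟩)

theorem sum_filter_ne_zero_filter [AddCommMonoid M] [DecidableEq M] (s : Finset ι) (x : ι → M)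
    (P : ι → Prop) [DecidablePred P] :
    ∑ p ∈ s.filter (x · ≠ 0) with P p, x p = ∑ p ∈ s with P p, x p := by
  rw [filter_comm, sum_filter_ne_zero]

end Finset

section Support

variable {ι : Type*} [Fintype ι]

theorem two_mul_card_image_support_le {β M : Type*} [AddCommMonoid M] [DecidableEq M]
    [DecidableEq β] (f : ι → β) {x : ι → M} (hfib : ∀ b, ∑ p with f p = b, x p = 0) :
    2 * #((univ.filter fun p => x p ≠ 0).image f) ≤ #(univ.filter fun p => x p ≠ 0) := by
  rw [card_eq_sum_card_image f, mul_comm, ← smul_eq_mul, ← sum_const]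
  refine sum_le_sum fun b hb => one_lt_card_of_sum_eq_zero (x := x) ?_ ?_ ?_
  · obtain ⟨p, hp, rfl⟩ := mem_image.mp hb
    exact ⟨p, mem_filter.mpr ⟨hp, rfl⟩⟩
  · exact fun p hp => (mem_filter.mp (mem_filter.mp hp).1).2
  · rw [sum_filter_ne_zero_filter, hfib b]

theorem sum_fiber_eq_zero_of_sum_mul_pow_eq_zero {R : Type*} [CommRing R] [IsDomain R]
    [DecidableEq R] {x v : ι → R}
    (h : ∀ l < #(univ.filter fun p => x p ≠ 0), ∑ p, x p * v p ^ l = 0) (b : R) :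
    ∑ p with v p = b, x p = 0 := by
  set T := univ.filter fun p => x p ≠ 0
  have hT : ∀ g : ι → R, ∑ p ∈ T, x p * g p = ∑ p, x p * g p :=
    fun g => sum_filter_of_ne fun p _ hp => left_ne_zero_of_mul hp
  have hgroup : ∀ l, ∑ c ∈ T.image v, (∑ p ∈ T with v p = c, x p) * c ^ l =
      ∑ p, x p * v p ^ l := by
    intro l
    rw [← hT, ← sum_fiberwise_of_maps_to fun p hp => mem_image_of_mem v hp]
    refine sum_congr rfl fun c _ => ?_
    rw [sum_mul]
    exact sum_congr rfl fun p hp => by rw [(mem_filter.mp hp).2]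
  have hfib : ∀ c ∈ T.image v, ∑ p ∈ T with v p = c, x p = 0 :=
    (T.image v).eq_zero_of_forall_sum_mul_pow_eq_zero fun l hl =>
      (hgroup l).trans (h l (hl.trans_le card_image_le))
  rw [← sum_filter_ne_zero_filter]
  by_cases hb : b ∈ T.image v
  · exact hfib b hb
  · rw [filter_false_of_mem fun p hp (hpb : v p = b) => hb (hpb ▸ mem_image_of_mem v hp),
      sum_empty]

end Support

theorem card_biUnion_image_add_card_le {ι κ α : Type*} [Fintype κ] [DecidableEq ι]
    [DecidableEq α] (a : ι → κ → α) (T : Finset (ι × κ)) :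
    #((T.image Prod.fst).biUnion fun i => univ.image (a i)) + #T ≤
      Fintype.card κ * #(T.image Prod.fst) + #(T.image fun p => a p.1 p.2) := by
  classical
  set S := T.image Prod.fst
  have hU : S.biUnion (fun i => univ.image (a i)) = (S ×ˢ univ).image fun p => a p.1 p.2 := by
    ext; simp
  have hTS : T ⊆ S ×ˢ univ := fun p hp => mem_product.mpr ⟨mem_image_of_mem _ hp, mem_univ _⟩
  have := card_image_add_card_le (fun p => a p.1 p.2) hTS
  rwa [card_product, card_univ, mul_comm, ← hU] at this

section ParityCheck

variable {F ι κ : Type*} [CommSemiring F] [Fintype ι] [Fintype κ] [DecidableEq ι] {n : ℕ}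

/-- The column of `H` at position `p = (i, j)` is `(e_i, a_p, a_p ^ 2, …, a_p ^ n)`. -/
def HasPowerColumns (H : Matrix (ι ⊕ Fin n) (ι × κ) F) (a : ι → κ → F) : Prop :=
  ∀ p, (fun rw => H rw p) = Sum.elim (fun i => if i = p.1 then (1 : F) else 0)
    (fun (l : Fin n) => a p.1 p.2 ^ ((l : ℕ) + 1))

variable {a : ι → κ → F} {H : Matrix (ι ⊕ Fin n) (ι × κ) F}

theorem mulVec_inl_eq_sum_fiber (hH : HasPowerColumns H a) (x : ι × κ → F) (i : ι) :
    H.mulVec x (Sum.inl i) = ∑ p with p.1 = i, x p := by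
  simp [Matrix.mulVec, dotProduct, fun rw p => congrFun (hH p) rw, sum_filter, eq_comm]

theorem mulVec_inr_eq_sum_mul_pow (hH : HasPowerColumns H a) (x : ι × κ → F) (l : Fin n) :
    H.mulVec x (Sum.inr l) = ∑ p, x p * a p.1 p.2 ^ ((l : ℕ) + 1) := by
  simp [Matrix.mulVec, dotProduct, fun rw p => congrFun (hH p) rw, mul_comm]

theorem sum_mul_pow_eq_zero_of_mulVec_eq_zero (hH : HasPowerColumns H a)
    {x : ι × κ → F} (hx : H.mulVec x = 0) {l : ℕ} (hl : l ≤ n) :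
    ∑ p, x p * a p.1 p.2 ^ l = 0 := by
  cases l with
  | zero =>
    simp only [pow_zero, mul_one]
    rw [← sum_fiberwise univ Prod.fst x]
    exact sum_eq_zero fun i _ => by rw [← mulVec_inl_eq_sum_fiber hH, hx, Pi.zero_apply]
  | succ l => rw [← mulVec_inr_eq_sum_mul_pow hH x ⟨l, hl⟩, hx, Pi.zero_apply]

end ParityCheck

theorem stmt_16_general {F : Type*} [Field F] [DecidableEq F]
    (d r m : ℕ)
    (a : Fin m → Fin (r + 1) → F)
    (hcover : ∀ S : Finset (Fin m), S.Nonempty → S.card ≤ (d - 1) / 2 →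
      r * S.card + 1 ≤ (S.biUnion (fun i => Finset.univ.image (a i))).card)
    (H : Matrix (Fin m ⊕ Fin (d - 2)) (Fin m × Fin (r + 1)) F)
    (hH : ∀ p, (fun rw => H rw p) = Sum.elim
      (fun i => if i = p.1 then (1 : F) else 0)
      (fun (l : Fin (d - 2)) => a p.1 p.2 ^ ((l : ℕ) + 1))) :
    ∀ x : Fin m × Fin (r + 1) → F, H.mulVec x = 0 → x ≠ 0 →
      d ≤ (Finset.univ.filter (fun p => x p ≠ 0)).card := by
  intro x hx hx0
  by_contra! hweight
  have hblocks := two_mul_card_image_support_le Prod.fst fun i => by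
    rw [← mulVec_inl_eq_sum_fiber hH, hx, Pi.zero_apply]
  have hvalues := two_mul_card_image_support_le (fun p : Fin m × Fin (r + 1) => a p.1 p.2) <|
    sum_fiber_eq_zero_of_sum_mul_pow_eq_zero fun l hl =>
      sum_mul_pow_eq_zero_of_mulVec_eq_zero hH hx (by omega)
  have hcount := card_biUnion_image_add_card_le a (univ.filter fun p => x p ≠ 0)
  rw [Fintype.card_fin, add_one_mul] at hcount
  set S := (univ.filter fun p => x p ≠ 0).image Prod.fst
  have hSne : S.Nonempty := by
    obtain ⟨p, hp⟩ := Function.ne_iff.mp hx0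
    exact ⟨p.1, mem_image_of_mem _ (mem_filter.mpr ⟨mem_univ p, hp⟩)⟩
  have hcovered := hcover S hSne ((Nat.le_div_iff_mul_le two_pos).mpr (by omega))
  omega

/-- If the sets `A_i` satisfy the covering condition up to `t = ⌊(d-1)/2⌋`,
then the code defined as the kernel of the Vandermonde-structured parity-check
matrix `H` has minimum Hamming distance at least `d`. -/
theorem stmt_16 {F : Type*} [Field F] [Fintype F] [DecidableEq F]
    (d r m : ℕ) (hd : 5 ≤ d) (hr : d - 2 ≤ r) (hm : 0 < m)
    (a : Fin m → Fin (r + 1) → F)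
    (hinj : ∀ i, Function.Injective (a i))
    (hcover : ∀ S : Finset (Fin m), S.Nonempty → S.card ≤ (d - 1) / 2 →
      r * S.card + 1 ≤ (S.biUnion (fun i => Finset.univ.image (a i))).card)
    (H : Matrix (Fin m ⊕ Fin (d - 2)) (Fin m × Fin (r + 1)) F)
    (hH : ∀ p, (fun rw => H rw p) = Sum.elim
      (fun i => if i = p.1 then (1 : F) else 0)
      (fun (l : Fin (d - 2)) => a p.1 p.2 ^ ((l : ℕ) + 1))) :
    ∀ x : Fin m × Fin (r + 1) → F, H.mulVec x = 0 → x ≠ 0 →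
      d ≤ (Finset.univ.filter (fun p => x p ≠ 0)).card :=
  stmt_16_general d r m a hcover H hH
end

section
/- Let a ≥ 2, r ≥ 1, q ≥ 10 a^2 (r+1)^2. Then Σ_{i=a}^{a(r+1)} C(a(r+1), i) (a(r+1)/q)^i ≤ (1.1/a!) (a^2(r+1)^2/q)^a, where C(n,k) denotes the binomial coefficient. -/
/-!
With `n = a(r+1)` and `x = n²/q ≤ 1/10`, the bound `C(n,i) ≤ nⁱ/i!` turns the `i`-th term into at
most `xⁱ/i!`. Since `i! ≥ a! (a+1)^(i-a)`, these terms are dominated by a geometric series of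
ratio `x/(a+1) ≤ 1/30` starting at `xᵃ/a!`, whose sum is below `1.1 · xᵃ/a!`.
-/

open Finset Nat

theorem choose_mul_pow_le_pow_div_factorial (n i : ℕ) {y : ℝ} (hy : 0 ≤ y) :
    (n.choose i : ℝ) * y ^ i ≤ (n * y) ^ i / i ! := by
  calc (n.choose i : ℝ) * y ^ i ≤ (n : ℝ) ^ i / i ! * y ^ i := by
        gcongr; exact choose_le_pow_div i n
    _ = (n * y) ^ i / i ! := by ring

theorem pow_div_factorial_le_mul_pow_sub {x : ℝ} (hx : 0 ≤ x) {a i : ℕ} (hai : a ≤ i) :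
    x ^ i / i ! ≤ x ^ a / a ! * (x / (a + 1)) ^ (i - a) := by
  obtain ⟨k, rfl⟩ := Nat.exists_eq_add_of_le hai
  have hfact : (a ! : ℝ) * (a + 1) ^ k ≤ (a + k)! := by
    exact_mod_cast factorial_mul_pow_le_factorial
  calc x ^ (a + k) / (a + k)! ≤ x ^ (a + k) / (a ! * (a + 1) ^ k) := by
        gcongr
    _ = x ^ a / a ! * (x / (a + 1)) ^ (a + k - a) := by
        rw [add_tsub_cancel_left, pow_add, div_pow, mul_div_mul_comm]

theorem sum_Icc_pow_div_factorial_le {x : ℝ} (hx : 0 ≤ x) (a n : ℕ) (hxa : x < a + 1) :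
    ∑ i ∈ Icc a n, x ^ i / i ! ≤ x ^ a / a ! * (1 - x / (a + 1))⁻¹ := by
  set t := x / (a + 1)
  have ht₀ : 0 ≤ t := by positivity
  have ht₁ : t < 1 := (div_lt_one (by positivity)).2 hxa
  calc ∑ i ∈ Icc a n, x ^ i / i ! ≤ ∑ i ∈ Icc a n, x ^ a / a ! * t ^ (i - a) :=
        sum_le_sum fun i hi => pow_div_factorial_le_mul_pow_sub hx (mem_Icc.1 hi).1
    _ = x ^ a / a ! * ∑ k ∈ Ico 0 (n + 1 - a), t ^ k := by
        rw [← mul_sum, ← Ico_add_one_right_eq_Icc, sum_Ico_eq_sum_range, range_eq_Ico]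
        simp only [add_tsub_cancel_left]
    _ ≤ x ^ a / a ! * (1 - t)⁻¹ := by
        gcongr
        simpa using geom_sum_Ico_le_of_lt_one (m := 0) (n := n + 1 - a) ht₀ ht₁

theorem stmt_18_general (a r q : ℕ) (ha : 2 ≤ a)
    (hq : 10 * a ^ 2 * (r + 1) ^ 2 ≤ q) :
    ∑ i ∈ Finset.Icc a (a * (r + 1)),
        ((a * (r + 1)).choose i : ℝ) * (((a : ℝ) * (r + 1)) / q) ^ i ≤
      (1.1 / (a.factorial : ℝ)) *
        (((a : ℝ) ^ 2 * ((r : ℝ) + 1) ^ 2) / q) ^ a := by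
  have haR : (2 : ℝ) ≤ a := by exact_mod_cast ha
  have hqR : (10 : ℝ) * a ^ 2 * (r + 1) ^ 2 ≤ q := by exact_mod_cast hq
  have hq₀ : (0 : ℝ) < q := lt_of_lt_of_le (by positivity) hqR
  set x : ℝ := (a : ℝ) ^ 2 * ((r : ℝ) + 1) ^ 2 / q
  have hx₀ : 0 ≤ x := by positivity
  have hx : x ≤ 1 / 10 := by
    rw [div_le_div_iff₀ hq₀ (by norm_num)]; linarith
  have hterm (i : ℕ) :
      ((a * (r + 1)).choose i : ℝ) * ((a : ℝ) * (r + 1) / q) ^ i ≤ x ^ i / i ! := by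
    have hnx : ((a * (r + 1) : ℕ) : ℝ) * ((a : ℝ) * (r + 1) / q) = x := by
      simp only [x]; push_cast; ring
    simpa only [hnx] using
      choose_mul_pow_le_pow_div_factorial (a * (r + 1)) i (y := a * (r + 1) / q) (by positivity)
  have hratio : (1 - x / (a + 1))⁻¹ ≤ 1.1 := by
    rw [inv_le_comm₀ (by rw [sub_pos, div_lt_one (by positivity)]; linarith) (by norm_num),
      le_sub_comm, div_le_iff₀ (by positivity)]
    nlinarith
  calc _ ≤ ∑ i ∈ Icc a (a * (r + 1)), x ^ i / i ! := sum_le_sum fun i _ => hterm i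
    _ ≤ x ^ a / a ! * (1 - x / (a + 1))⁻¹ :=
        sum_Icc_pow_div_factorial_le hx₀ a _ (by linarith)
    _ ≤ x ^ a / a ! * 1.1 := by gcongr
    _ = 1.1 / a ! * x ^ a := by ring

/-- The tail bound used in the probabilistic construction:
`Σ_{i=a}^{a(r+1)} C(a(r+1), i) (a(r+1)/q)^i ≤ (1.1/a!) (a²(r+1)²/q)^a`. -/
theorem stmt_18 (a r q : ℕ) (ha : 2 ≤ a) (hr : 1 ≤ r)
    (hq : 10 * a ^ 2 * (r + 1) ^ 2 ≤ q) :
    ∑ i ∈ Finset.Icc a (a * (r + 1)),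
        ((a * (r + 1)).choose i : ℝ) * (((a : ℝ) * (r + 1)) / q) ^ i ≤
      (1.1 / (a.factorial : ℝ)) *
        (((a : ℝ) ^ 2 * ((r : ℝ) + 1) ^ 2) / q) ^ a :=
  stmt_18_general a r q ha hq
end
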